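/- The family of vector fields on ℝ³ given by L_n = e^{−nt} ∂_t + n e^{−nt} ∂_x + ((n³−n)/6)·e^{−nt−2x} ∂_u (n ∈ ℤ) is a realization of the Witt algebra: [L_m, L_n] = (m−n)L_{m+n} for all m, n ∈ ℤ. (This is the realization 𝔚₁₀ of Theorem 1; note that (sgn(n)/2)·Σ_{j=1}^{|n|} j(j−1) = (n³−n)/6.) -/

import Mathlib

/-!
Write `L_n = e^{-nt} (∂_t + n ∂_x + c_n e^{-2x} ∂_u)` with `c_n = (n³ - n)/6`. Every component
of `L_n` is `e^{-nt}` times a function of `x`, so each component of `[L_m, L_n]` is again an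
exponential `e^{-(m+n)t}` (times `e^{-2x}` in the `u`-direction) with a polynomial coefficient.
The `t`- and `x`-coefficients are `m - n` and `m² - n²`, and the `u`-coefficient is
`(m + 2n) c_m - (n + 2m) c_n`, which equals `(m - n) c_{m+n}` by a polynomial identity.
-/

/-- Lie bracket of smooth vector fields on `ℝ³` (coordinates `(t,x,u)`), identified with
`C^∞` maps `ℝ³ → ℝ³`: `[X,Y](p) = (DY)(p)(X(p)) - (DX)(p)(Y(p))`. -/
noncomputable def lieBracket3 (X Y : ℝ × ℝ × ℝ → ℝ × ℝ × ℝ) : ℝ × ℝ × ℝ → ℝ × ℝ × ℝ :=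
  fun p => fderiv ℝ Y p (X p) - fderiv ℝ X p (Y p)

/-- The realization `𝔚₁₀`:
`L_n = e^{-nt} ∂_t + n e^{-nt} ∂_x + ((n³-n)/6)·e^{-nt-2x} ∂_u`. -/
noncomputable def W10field (n : ℤ) : ℝ × ℝ × ℝ → ℝ × ℝ × ℝ := fun p =>
  (Real.exp (-(n : ℝ) * p.1),
   (n : ℝ) * Real.exp (-(n : ℝ) * p.1),
   (((n : ℝ) ^ 3 - (n : ℝ)) / 6) * Real.exp (-(n : ℝ) * p.1 - 2 * p.2.1))

open Real

lemma witt_coeff_identity (m n : ℝ) :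
    (m + 2 * n) * ((m ^ 3 - m) / 6) - (n + 2 * m) * ((n ^ 3 - n) / 6)
      = (m - n) * (((m + n) ^ 3 - (m + n)) / 6) := by
  ring

lemma fderiv_W10field_apply (n : ℤ) (p v : ℝ × ℝ × ℝ) :
    fderiv ℝ (W10field n) p v =
      (-n * v.1 * exp (-n * p.1),
       -n ^ 2 * v.1 * exp (-n * p.1),
       ((n : ℝ) ^ 3 - n) / 6 * (-n * v.1 - 2 * v.2.1) * exp (-n * p.1 - 2 * p.2.1)) := by
  have ht := (hasFDerivAt_fst (𝕜 := ℝ) (p := p)).const_mul (-(n : ℝ))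
  have hx := (hasFDerivAt_fst (𝕜 := ℝ) (p := p.2)).comp p (hasFDerivAt_snd (p := p))
  have hW : HasFDerivAt (W10field n) _ p :=
    ht.exp.prodMk ((ht.exp.const_mul (n : ℝ)).prodMk ((ht.sub (hx.const_mul 2)).exp.const_mul _))
  rw [hW.fderiv]
  ext <;>
    simp only [Function.comp_apply, Pi.sub_apply, ContinuousLinearMap.prod_apply,
      smul_apply, sub_apply, ContinuousLinearMap.comp_apply, ContinuousLinearMap.coe_fst',
      ContinuousLinearMap.coe_snd', smul_eq_mul] <;>
    ring

/-- The family `(W10field n)` is a realization of the Witt algebra on `ℝ³`: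
`[L_m, L_n] = (m - n) L_{m+n}` for all `m, n ∈ ℤ`. -/
theorem W10_realization :
    ∀ m n : ℤ, lieBracket3 (W10field m) (W10field n)
      = fun p => ((m : ℝ) - (n : ℝ)) • W10field (m + n) p := by
  intro m n
  funext p
  have hexp_t : exp (-((m + n : ℤ) : ℝ) * p.1) = exp (-m * p.1) * exp (-n * p.1) := by
    rw [← exp_add]; push_cast; ring_nf
  have hexp_u (k : ℤ) : exp (-k * p.1 - 2 * p.2.1) = exp (-k * p.1) * exp (-2 * p.2.1) := by
    rw [← exp_add]; ring_nf
  simp only [lieBracket3, fderiv_W10field_apply, W10field, Prod.smul_mk, smul_eq_mul,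
    Prod.mk_sub_mk, hexp_u, hexp_t]
  push_cast
  refine Prod.ext (by ring) (Prod.ext (by ring) ?_)
  linear_combination exp (-m * p.1) * exp (-n * p.1) * exp (-2 * p.2.1) * witt_coeff_identity m n
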